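/- For every integer m ≥ 1, the optimal threshold factor satisfies R_{m,1} = m; moreover the polynomial Φ(x) = (1 + x/m)^m belongs to Π_{m,1} and satisfies R(Φ) = m. -/

import Mathlib

open Polynomial

noncomputable section

/-- A polynomial is absolutely monotonic on `[a, b]` if all of its derivatives
(including the 0th) are nonnegative at every point of `[a, b]`. -/
def AbsolutelyMonotonicOn (φ : Polynomial ℝ) (a b : ℝ) : Prop :=
  ∀ (k : ℕ), ∀ x ∈ Set.Icc a b, 0 ≤ (Polynomial.derivative^[k] φ).eval x

/-- The set `Π_{m,n}` of real polynomials of degree at most `m` with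
`φ^{(k)}(0) = 1` for `k = 0, 1, …, n`. -/
def PiSet (m n : ℕ) : Set (Polynomial ℝ) :=
  {φ : Polynomial ℝ | φ.natDegree ≤ m ∧ ∀ k ≤ n, (Polynomial.derivative^[k] φ).eval 0 = 1}

/-- The threshold factor `R(φ)`. -/
def thresholdFactor (φ : Polynomial ℝ) : ℝ :=
  sSup {r : ℝ | r = 0 ∨ (0 < r ∧ AbsolutelyMonotonicOn φ (-r) 0)}

/-- The optimal threshold factor `R_{m,n}`. -/
def Ropt (m n : ℕ) : ℝ :=
  sSup (thresholdFactor '' PiSet m n)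

/-! If `φ` is absolutely monotonic on `[-r, 0]`, its Taylor expansion `p` at `-r` has nonnegative
coefficients, and for such a `p` of degree at most `m` one has `x p'(x) ≤ m p(x)` for `x ≥ 0`.
At `x = r` this reads `r φ'(0) ≤ m φ(0)`, i.e. `r ≤ m` on `Π_{m,1}`. The bound is attained by
`(1 + x/m)^m`, whose derivatives are nonnegative multiples of powers of `1 + x/m ≥ 0` on `[-m, 0]`. -/

namespace Polynomial

variable {R : Type*} [CommRing R]

lemma derivative_taylor (r : R) (f : R[X]) : derivative (taylor r f) = taylor r (derivative f) := by
  simp [taylor_apply, derivative_comp]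

lemma iterate_derivative_one_add_C_mul_X_pow (a : R) (n k : ℕ) :
    derivative^[k] ((1 + C a * X) ^ n) =
      C ((n.descFactorial k : R) * a ^ k) * (1 + C a * X) ^ (n - k) := by
  induction k with
  | zero => simp
  | succ k ih =>
    rw [Function.iterate_succ_apply', ih, derivative_C_mul, derivative_pow, Nat.sub_sub,
      Nat.descFactorial_succ]
    simp only [derivative_add, derivative_one, derivative_C_mul_X, zero_add, C_mul, C_pow,
      Nat.cast_mul, map_natCast]
    ring

section Ordered

variable {K : Type*} [CommRing K] [LinearOrder K] [IsStrictOrderedRing K]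

lemma mul_eval_derivative_le_of_coeff_nonneg {p : K[X]} {m : ℕ} (hdeg : p.natDegree ≤ m)
    (hcoeff : ∀ k, 0 ≤ p.coeff k) {x : K} (hx : 0 ≤ x) :
    x * (derivative p).eval x ≤ m * p.eval x := by
  rw [derivative_eval, eval_eq_sum, Polynomial.sum_def, Polynomial.sum_def, Finset.mul_sum,
    Finset.mul_sum]
  refine Finset.sum_le_sum fun k hk => ?_
  have hkm : (k : K) ≤ m := by exact_mod_cast (le_natDegree_of_mem_supp k hk).trans hdeg
  have hterm : x * (p.coeff k * k * x ^ (k - 1)) = k * (p.coeff k * x ^ k) := by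
    rcases Nat.eq_zero_or_pos k with rfl | hk0
    · simp
    · rw [← Nat.sub_add_cancel hk0, pow_succ]; simp only [Nat.add_sub_cancel]; push_cast; ring
  rw [hterm]
  exact mul_le_mul_of_nonneg_right hkm (mul_nonneg (hcoeff k) (pow_nonneg hx k))

lemma coeff_taylor_nonneg {φ : K[X]} {a : K} (h : ∀ k, 0 ≤ (derivative^[k] φ).eval a) (k : ℕ) :
    0 ≤ (taylor a φ).coeff k := by
  have hk := h k
  rw [← factorial_smul_hasseDeriv, LinearMap.smul_apply, eval_smul, nsmul_eq_mul] at hk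
  rw [taylor_coeff]
  exact nonneg_of_mul_nonneg_right hk (by positivity)

end Ordered

end Polynomial

lemma AbsolutelyMonotonicOn.mul_eval_derivative_le {φ : ℝ[X]} {m : ℕ} {r : ℝ}
    (h : AbsolutelyMonotonicOn φ (-r) 0) (hdeg : φ.natDegree ≤ m) (hr : 0 ≤ r) :
    r * (derivative φ).eval 0 ≤ m * φ.eval 0 := by
  have key := mul_eval_derivative_le_of_coeff_nonneg (p := taylor (-r) φ) (m := m)
    (by rwa [natDegree_taylor]) (coeff_taylor_nonneg fun k => h k (-r) ⟨le_rfl, by linarith⟩) hr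
  simpa [derivative_taylor, taylor_eval] using key

lemma le_of_absolutelyMonotonicOn_of_mem_PiSet {φ : ℝ[X]} {m : ℕ} {r : ℝ} (hφ : φ ∈ PiSet m 1)
    (hr : 0 ≤ r) (h : AbsolutelyMonotonicOn φ (-r) 0) : r ≤ m := by
  obtain ⟨hdeg, hval⟩ := hφ
  have h0 : φ.eval 0 = 1 := hval 0 zero_le_one
  have h1 : (derivative φ).eval 0 = 1 := hval 1 le_rfl
  simpa [h0, h1] using h.mul_eval_derivative_le hdeg hr

lemma mem_upperBounds_threshold_set {φ : ℝ[X]} {c : ℝ} (hc : 0 ≤ c)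
    (h : ∀ r, 0 < r → AbsolutelyMonotonicOn φ (-r) 0 → r ≤ c) :
    c ∈ upperBounds {r : ℝ | r = 0 ∨ (0 < r ∧ AbsolutelyMonotonicOn φ (-r) 0)} := by
  rintro s (rfl | ⟨hs, hAM⟩)
  exacts [hc, h s hs hAM]

lemma thresholdFactor_le_of_mem_PiSet {φ : ℝ[X]} {m : ℕ} (hφ : φ ∈ PiSet m 1) :
    thresholdFactor φ ≤ m :=
  csSup_le ⟨0, Or.inl rfl⟩ <| mem_upperBounds_threshold_set (Nat.cast_nonneg m)
    fun _ hr => le_of_absolutelyMonotonicOn_of_mem_PiSet hφ hr.le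

lemma absolutelyMonotonicOn_one_add_inv_mul_X_pow (m : ℕ) :
    AbsolutelyMonotonicOn ((1 + C (m : ℝ)⁻¹ * X) ^ m) (-m) 0 := by
  intro k x hx
  have hbase : 0 ≤ 1 + (m : ℝ)⁻¹ * x := by
    rcases eq_or_ne m 0 with rfl | hm
    · simp
    · have : (m : ℝ)⁻¹ * (-m) ≤ (m : ℝ)⁻¹ * x := mul_le_mul_of_nonneg_left hx.1 (by positivity)
      rw [mul_neg, inv_mul_cancel₀ (by exact_mod_cast hm)] at this
      linarith
  rw [iterate_derivative_one_add_C_mul_X_pow]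
  simp only [eval_mul, eval_C, eval_pow, eval_add, eval_one, eval_X]
  positivity

lemma one_add_inv_mul_X_pow_mem_PiSet {m : ℕ} (hm : m ≠ 0) :
    (1 + C (m : ℝ)⁻¹ * X) ^ m ∈ PiSet m 1 := by
  refine ⟨natDegree_pow_le_of_le m (by compute_degree) |>.trans (mul_one m).le, fun k hk => ?_⟩
  interval_cases k <;> rw [iterate_derivative_one_add_C_mul_X_pow] <;> simp [hm]

lemma thresholdFactor_one_add_inv_mul_X_pow {m : ℕ} (hm : m ≠ 0) :
    thresholdFactor ((1 + C (m : ℝ)⁻¹ * X) ^ m) = m :=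
  IsGreatest.csSup_eq ⟨Or.inr ⟨by positivity, absolutelyMonotonicOn_one_add_inv_mul_X_pow m⟩,
    mem_upperBounds_threshold_set (Nat.cast_nonneg m)
      fun _ hr =>
        le_of_absolutelyMonotonicOn_of_mem_PiSet (one_add_inv_mul_X_pow_mem_PiSet hm) hr.le⟩

theorem statement12 (m : ℕ) (hm : 1 ≤ m) :
    Ropt m 1 = (m : ℝ) ∧
    ((1 : Polynomial ℝ) + Polynomial.C ((m : ℝ))⁻¹ * Polynomial.X) ^ m ∈ PiSet m 1 ∧
    thresholdFactor (((1 : Polynomial ℝ) + Polynomial.C ((m : ℝ))⁻¹ * Polynomial.X) ^ m)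
      = (m : ℝ) := by
  have hm0 : m ≠ 0 := Nat.one_le_iff_ne_zero.mp hm
  have hmem := one_add_inv_mul_X_pow_mem_PiSet hm0
  have hΦ := thresholdFactor_one_add_inv_mul_X_pow hm0
  refine ⟨IsGreatest.csSup_eq ⟨⟨_, hmem, hΦ⟩, ?_⟩, hmem, hΦ⟩
  rintro _ ⟨φ, hφ, rfl⟩
  exact thresholdFactor_le_of_mem_PiSet hφ
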